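/- arXiv:1912.05177 — 5 statements merged into one kernel-verified Lean document; each statement's English description precedes it below -/
import Mathlib

section
/- The function γ : ℝ^d → ℝ that sends θ to the maximum of the real parts of the complex eigenvalues of K(θ) is a convex function on ℝ^d. -/
/-!
For a Metzler matrix `M`, a positive vector `x` with `M x ≤ r x` bounds every eigenvalue by
`re μ ≤ r` (Gershgorin's theorem for `diag(x)⁻¹ M diag(x)`), and conversely for every `ε > 0`
there is such an `x` with `r = γ(M) + ε`: shift `M` by a large multiple of the identity to make
it nonnegative with spectral radius below `γ(M) + c + ε`, and take a truncated Neumann series,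
which Gelfand's formula makes a supersolution. So `γ(M)` is the infimum of the Collatz–Wielandt
numbers `max_i (M x)_i / x_i`. For `M = diag(f) + Q` this number is `f_i + (Q x)_i / x_i`, and
by the weighted AM–GM inequality `(Q x)_i / x_i` is convex in `log x` because `Q` is nonnegative
off the diagonal. Taking `x = u^a w^b` for near-optimal `u`, `w` at `θ₁`, `θ₂` then gives
`γ(aθ₁ + bθ₂) ≤ a γ(θ₁) + b γ(θ₂) + ε`.
-/

open Matrix Filter

-- In the ℓ∞ operator norm, the norm of a nonnegative matrix is its largest row sum.
attribute [local instance] Matrix.linftyOpNormedRing Matrix.linftyOpNormedAlgebra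

theorem Complex.eventually_norm_add_ofReal_le {R g ε : ℝ} (hε : 0 < ε) :
    ∀ᶠ c : ℝ in atTop, ∀ z : ℂ, ‖z‖ ≤ R → z.re ≤ g → ‖z + c‖ ≤ g + c + ε := by
  filter_upwards [eventually_ge_atTop (R + R ^ 2 / ε)] with c hc z hz hre
  have hRe := (abs_le.1 ((abs_re_le_norm z).trans hz)).1
  have hIm := sq_le_sq' (abs_le.1 ((abs_im_le_norm z).trans hz)).1
    (abs_le.1 ((abs_im_le_norm z).trans hz)).2
  have hpos : R ^ 2 / ε ≤ z.re + c := by linarith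
  have hIm' : z.im ^ 2 ≤ ε * (z.re + c) := hIm.trans ((div_le_iff₀' hε).1 hpos)
  have hpos' : 0 ≤ z.re + c := (div_nonneg (sq_nonneg R) hε.le).trans hpos
  rw [norm_def, Real.sqrt_le_iff, normSq_apply]
  simp only [add_re, ofReal_re, add_im, ofReal_im, add_zero]
  constructor <;> nlinarith

theorem spectrum.exists_norm_pow_le_of_spectralRadius_lt {A : Type*} [NormedRing A]
    [NormedAlgebra ℂ A] [CompleteSpace A] {a : A} {ρ : ℝ}
    (h : spectralRadius ℂ a < ENNReal.ofReal ρ) : ∃ n ≠ 0, ‖a ^ n‖ ≤ ρ ^ n := by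
  obtain ⟨n, hn, hlt⟩ := ((eventually_ne_atTop 0).and
    ((pow_norm_pow_one_div_tendsto_nhds_spectralRadius a).eventually (gt_mem_nhds h))).exists
  refine ⟨n, hn, ?_⟩
  rw [ENNReal.ofReal_lt_ofReal_iff', one_div] at hlt
  calc ‖a ^ n‖ = (‖a ^ n‖ ^ (n⁻¹ : ℝ)) ^ n := (Real.rpow_inv_natCast_pow (norm_nonneg _) hn).symm
    _ ≤ ρ ^ n := pow_le_pow_left₀ (by positivity) hlt.1.le n

namespace Matrix

variable {ι : Type*}

def IsMetzler (M : Matrix ι ι ℝ) : Prop := Pairwise fun i j => 0 ≤ M i j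

theorem IsMetzler.diagonal_add [DecidableEq ι] {Q : Matrix ι ι ℝ} (hQ : Q.IsMetzler)
    (f : ι → ℝ) : (diagonal f + Q).IsMetzler := fun i j hij => by
  simpa [diagonal_apply_ne _ hij] using hQ hij

variable [Fintype ι]

theorem IsMetzler.mulVec_rpow_mul_rpow_div_le {Q : Matrix ι ι ℝ} (hQ : Q.IsMetzler)
    {u w : ι → ℝ} (hu : ∀ i, 0 < u i) (hw : ∀ i, 0 < w i) {a b : ℝ} (ha : 0 ≤ a) (hb : 0 ≤ b)
    (hab : a + b = 1) (i : ι) :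
    (Q *ᵥ fun j => u j ^ a * w j ^ b) i / (u i ^ a * w i ^ b) ≤
      a * ((Q *ᵥ u) i / u i) + b * ((Q *ᵥ w) i / w i) := by
  simp only [mulVec, dotProduct, Finset.sum_div, Finset.mul_sum, ← Finset.sum_add_distrib]
  refine Finset.sum_le_sum fun j _ => ?_
  have hu' := (hu i).ne'
  have hw' := (hw i).ne'
  have hx := (mul_pos (Real.rpow_pos_of_pos (hu i) a) (Real.rpow_pos_of_pos (hw i) b)).ne'
  rcases eq_or_ne i j with rfl | hij
  · rw [mul_div_cancel_right₀ _ hx, mul_div_cancel_right₀ _ hu', mul_div_cancel_right₀ _ hw',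
      ← add_mul, hab, one_mul]
  · calc Q i j * (u j ^ a * w j ^ b) / (u i ^ a * w i ^ b)
        = Q i j * ((u j / u i) ^ a * (w j / w i) ^ b) := by
          rw [Real.div_rpow (hu j).le (hu i).le, Real.div_rpow (hw j).le (hw i).le,
            mul_div_assoc, mul_div_mul_comm]
      _ ≤ Q i j * (a * (u j / u i) + b * (w j / w i)) :=
          mul_le_mul_of_nonneg_left (Real.geom_mean_le_arith_mean2_weighted ha hb
            (div_nonneg (hu j).le (hu i).le) (div_nonneg (hw j).le (hw i).le) hab) (hQ hij)
      _ = a * (Q i j * u j / u i) + b * (Q i j * w j / w i) := by ring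

variable [DecidableEq ι]

theorem diagonal_add_mulVec_apply_le_iff (f : ι → ℝ) (Q : Matrix ι ι ℝ) {y : ι → ℝ} {i : ι}
    (hy : 0 < y i) (r : ℝ) : ((diagonal f + Q) *ᵥ y) i ≤ r * y i ↔ f i + (Q *ᵥ y) i / y i ≤ r := by
  rw [add_div' _ _ _ hy.ne', div_le_iff₀ hy, add_mulVec, Pi.add_apply, mulVec_diagonal]

theorem IsMetzler.diagonal_add_mulVec_rpow_mul_rpow_le {Q : Matrix ι ι ℝ}
    (hQ : Q.IsMetzler) {f g u w : ι → ℝ} (hu : ∀ i, 0 < u i) (hw : ∀ i, 0 < w i) {r s a b : ℝ}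
    (ha : 0 ≤ a) (hb : 0 ≤ b) (hab : a + b = 1) (hfu : (diagonal f + Q) *ᵥ u ≤ r • u)
    (hgw : (diagonal g + Q) *ᵥ w ≤ s • w) :
    (diagonal (a • f + b • g) + Q) *ᵥ (fun i => u i ^ a * w i ^ b) ≤
      (a * r + b * s) • fun i => u i ^ a * w i ^ b := by
  intro i
  have hfu' := (diagonal_add_mulVec_apply_le_iff f Q (hu i) r).1 (hfu i)
  have hgw' := (diagonal_add_mulVec_apply_le_iff g Q (hw i) s).1 (hgw i)
  have hQx := hQ.mulVec_rpow_mul_rpow_div_le hu hw ha hb hab i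
  rw [Pi.smul_apply, smul_eq_mul, diagonal_add_mulVec_apply_le_iff (y := fun j => u j ^ a * w j ^ b)
    _ _ (mul_pos (Real.rpow_pos_of_pos (hu i) a) (Real.rpow_pos_of_pos (hw i) b))]
  simp only [Pi.add_apply, Pi.smul_apply, smul_eq_mul]
  linear_combination hQx + a * hfu' + b * hgw'

theorem sum_le_linfty_opNorm_map_ofReal (B : Matrix ι ι ℝ) (i : ι) :
    ∑ j, B i j ≤ ‖B.map Complex.ofReal‖ := by
  calc ∑ j, B i j ≤ ∑ j, ‖B.map Complex.ofReal i j‖ :=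
        Finset.sum_le_sum fun j _ => by simpa using le_abs_self (B i j)
    _ ≤ ‖B.map Complex.ofReal‖ := by
        rw [linfty_opNorm_def]
        simpa using NNReal.coe_le_coe.2
          (Finset.le_sup (f := fun i => ∑ j, ‖B.map Complex.ofReal i j‖₊) (Finset.mem_univ i))

theorem IsMetzler.re_le_of_mulVec_le {M : Matrix ι ι ℝ} (hM : M.IsMetzler)
    {x : ι → ℝ} (hx : ∀ i, 0 < x i) {r : ℝ} (hMx : M *ᵥ x ≤ r • x) {μ : ℂ}
    (hμ : μ ∈ spectrum ℂ (M.map Complex.ofReal)) : μ.re ≤ r := by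
  have hX : ∀ i, (x i : ℂ) ≠ 0 := fun i => Complex.ofReal_ne_zero.2 (hx i).ne'
  let D : (Matrix ι ι ℂ)ˣ :=
    ⟨diagonal fun i => (x i : ℂ), diagonal fun i => (x i : ℂ)⁻¹, by simp [hX], by simp [hX]⟩
  set C := (↑D⁻¹ : Matrix ι ι ℂ) * M.map Complex.ofReal * (D : Matrix ι ι ℂ)
  have hC : ∀ k j, C k j = ((M k j * x j / x k : ℝ) : ℂ) := by
    intro k j
    simp only [C, D, Units.inv_mk, mul_diagonal, diagonal_mul, map_apply, Complex.ofReal_div,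
      Complex.ofReal_mul]
    ring
  have hμC : Module.End.HasEigenvalue (toLin' C) μ := by
    rwa [Module.End.hasEigenvalue_iff_mem_spectrum, spectrum_toLin', spectrum.units_conjugate']
  obtain ⟨k, hk⟩ := eigenvalue_mem_ball hμC
  rw [mem_closedBall_iff_norm] at hk
  have hoff : ∑ j ∈ Finset.univ.erase k, ‖C k j‖ =
      ∑ j ∈ Finset.univ.erase k, M k j * x j / x k := by
    refine Finset.sum_congr rfl fun j hj => ?_
    rw [hC, Complex.norm_real, Real.norm_of_nonneg]
    exact div_nonneg (mul_nonneg (hM (Finset.ne_of_mem_erase hj).symm) (hx j).le) (hx k).le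
  calc μ.re = (C k k).re + (μ - C k k).re := by simp
    _ ≤ M k k + ‖μ - C k k‖ := by
        rw [hC, Complex.ofReal_re, mul_div_cancel_right₀ _ (hx k).ne']
        exact add_le_add_right (Complex.re_le_norm _) _
    _ ≤ (M *ᵥ x) k / x k := by
        rw [mulVec, dotProduct, Finset.sum_div, ← Finset.add_sum_erase _ _ (Finset.mem_univ k),
          mul_div_cancel_right₀ _ (hx k).ne', ← hoff]
        exact add_le_add_right hk _
    _ ≤ r := by rw [div_le_iff₀ (hx k)]; exact hMx k

theorem exists_pos_mulVec_le_of_pow_mulVec_one_le {A : Matrix ι ι ℝ}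
    (hA : ∀ i j, 0 ≤ A i j) {ρ : ℝ} (hρ : 0 < ρ) {n : ℕ} (hn : n ≠ 0)
    (hAn : A ^ n *ᵥ 1 ≤ ρ ^ n • 1) : ∃ u : ι → ℝ, (∀ i, 0 < u i) ∧ A *ᵥ u ≤ ρ • u := by
  set f : ℕ → ι → ℝ := fun k => (ρ ^ k)⁻¹ • (A ^ k *ᵥ 1)
  have hf0 : f 0 = 1 := by simp [f]
  have hfn : f n ≤ 1 := by
    rw [← inv_smul_le_iff_of_pos (by positivity)] at hAn
    simpa [f] using hAn
  have hf_nonneg : ∀ k, 0 ≤ f k := by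
    intro k
    refine smul_nonneg (by positivity) fun i => Finset.sum_nonneg fun j _ => ?_
    simpa using pow_apply_nonneg hA k i j
  have hAf : ∀ k, A *ᵥ f k = ρ • f (k + 1) := by
    intro k
    simp only [f, mulVec_smul, smul_smul, pow_succ', mulVec_mulVec]
    rw [mul_inv, ← mul_assoc, mul_inv_cancel₀ hρ.ne', one_mul]
  refine ⟨∑ k ∈ Finset.range n, f k, fun i => ?_, ?_⟩
  · have hle : f 0 ≤ ∑ k ∈ Finset.range n, f k :=
      Finset.single_le_sum (fun k _ => hf_nonneg k) (Finset.mem_range.2 (Nat.pos_of_ne_zero hn))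
    exact zero_lt_one.trans_le (by simpa [hf0] using hle i)
  · have htel := Finset.sum_range_succ' f n
    rw [Finset.sum_range_succ, hf0] at htel
    rw [mulVec_sum, Finset.sum_congr rfl fun k _ => hAf k, ← Finset.smul_sum]
    refine smul_le_smul_of_nonneg_left ?_ hρ.le
    calc ∑ k ∈ Finset.range n, f (k + 1)
        = ∑ k ∈ Finset.range n, f k + (f n - 1) := by
          rw [← add_sub_assoc, htel, add_sub_cancel_right]
      _ ≤ ∑ k ∈ Finset.range n, f k := add_le_of_nonpos_right (sub_nonpos.2 hfn)

theorem IsMetzler.exists_pos_mulVec_le {M : Matrix ι ι ℝ} (hM : M.IsMetzler) {g ε : ℝ}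
    (hg : ∀ μ ∈ spectrum ℂ (M.map Complex.ofReal), μ.re ≤ g) (hε : 0 < ε) :
    ∃ u : ι → ℝ, (∀ i, 0 < u i) ∧ M *ᵥ u ≤ (g + ε) • u := by
  obtain ⟨c, hcg, hc_diag, hc_disk⟩ : ∃ c : ℝ, -g - ε < c ∧ (∀ i, -M i i ≤ c) ∧
      ∀ z : ℂ, ‖z‖ ≤ ‖M.map Complex.ofReal‖ * ‖(1 : Matrix ι ι ℂ)‖ → z.re ≤ g →
        ‖z + c‖ ≤ g + c + ε / 2 :=
    ((eventually_gt_atTop _).and <| (eventually_all.2 fun i => eventually_ge_atTop _).and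
      (Complex.eventually_norm_add_ofReal_le (half_pos hε))).exists
  have hρ : 0 < g + c + ε := by linarith
  set A := M + c • (1 : Matrix ι ι ℝ)
  have hA : ∀ i j, 0 ≤ A i j := by
    intro i j
    rcases eq_or_ne i j with rfl | hij
    · simp only [A, add_apply, smul_apply, one_apply_eq, smul_eq_mul, mul_one]
      linarith [hc_diag i]
    · simpa [A, hij] using hM hij
  have hAc : A.map Complex.ofReal = algebraMap ℂ _ (c : ℂ) + M.map Complex.ofReal := by
    rw [Algebra.algebraMap_eq_smul_one, add_comm]
    ext i j
    by_cases h : i = j <;> simp [A, h]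
  have hrad : spectralRadius ℂ (A.map Complex.ofReal) < ENNReal.ofReal (g + c + ε) := by
    refine lt_of_le_of_lt (iSup₂_le fun ν hν => ?_) ((ENNReal.ofReal_lt_ofReal_iff hρ).2
      (by linarith : g + c + ε / 2 < g + c + ε))
    rw [hAc, ← sub_add_cancel ν (c : ℂ), spectrum.add_mem_add_iff] at hν
    rw [← ENNReal.ofReal_coe_nnreal, coe_nnnorm, ← sub_add_cancel ν (c : ℂ)]
    exact ENNReal.ofReal_le_ofReal
      (hc_disk _ (spectrum.norm_le_norm_mul_of_mem hν) (hg _ hν))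
  obtain ⟨n, hn, hAn⟩ := spectrum.exists_norm_pow_le_of_spectralRadius_lt hrad
  have hrows : A ^ n *ᵥ 1 ≤ (g + c + ε) ^ n • 1 := fun i => by
    simpa [mulVec, dotProduct] using (sum_le_linfty_opNorm_map_ofReal (A ^ n) i).trans
      ((Matrix.map_pow A Complex.ofRealHom n ▸ hAn))
  obtain ⟨u, hu, hAu⟩ := exists_pos_mulVec_le_of_pow_mulVec_one_le hA hρ hn hrows
  refine ⟨u, hu, fun i => ?_⟩
  have := hAu i
  simp only [A, add_mulVec, smul_mulVec, one_mulVec, Pi.add_apply, Pi.smul_apply,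
    smul_eq_mul] at this ⊢
  linarith

end Matrix

theorem gamma_convex_general (m d : ℕ)
    (Q : Matrix (Fin m) (Fin m) ℝ)
    (hQoff : ∀ i j, i ≠ j → 0 ≤ Q i j)
    (v : Fin d → Fin m → ℝ)
    (γ : (Fin d → ℝ) → ℝ)
    (hγ : ∀ θ : Fin d → ℝ, IsGreatest
      (Complex.re '' spectrum ℂ
        ((Matrix.diagonal (fun i => ∑ k, θ k * v k i) + Q).map Complex.ofReal))
      (γ θ)) :
    ConvexOn ℝ Set.univ γ := by
  have hQ : Q.IsMetzler := fun i j hij => hQoff i j hij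
  have hγ_le : ∀ θ, ∀ μ ∈ spectrum ℂ
      ((diagonal (fun i => ∑ k, θ k * v k i) + Q).map Complex.ofReal), μ.re ≤ γ θ :=
    fun θ μ hμ => (hγ θ).2 ⟨μ, hμ, rfl⟩
  refine ⟨convex_univ, fun θ₁ _ θ₂ _ a b ha hb hab => le_of_forall_pos_le_add fun ε hε => ?_⟩
  obtain ⟨u, hu, hKu⟩ := (hQ.diagonal_add _).exists_pos_mulVec_le (hγ_le θ₁) hε
  obtain ⟨w, hw, hKw⟩ := (hQ.diagonal_add _).exists_pos_mulVec_le (hγ_le θ₂) hε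
  have hdiag : (fun i => ∑ k, (a • θ₁ + b • θ₂) k * v k i) =
      a • (fun i => ∑ k, θ₁ k * v k i) + b • fun i => ∑ k, θ₂ k * v k i := by
    ext i
    simp [Finset.mul_sum, ← Finset.sum_add_distrib, add_mul, mul_assoc]
  have hKx := hQ.diagonal_add_mulVec_rpow_mul_rpow_le hu hw ha hb hab hKu hKw
  rw [← hdiag] at hKx
  obtain ⟨μ, hμ, hμγ⟩ := (hγ (a • θ₁ + b • θ₂)).1
  have hre := (hQ.diagonal_add _).re_le_of_mulVec_le
    (fun i => mul_pos (Real.rpow_pos_of_pos (hu i) a) (Real.rpow_pos_of_pos (hw i) b)) hKx hμ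
  rw [hμγ] at hre
  simp only [smul_eq_mul]
  linear_combination hre + ε * hab

/-- The Perron–Frobenius eigenvalue `γ θ`, i.e. the maximum of the real parts of
the complex eigenvalues of `K(θ) = diag(∑ k, θ k * v k) + Q`, is a convex function on `ℝ^d`. -/
theorem gamma_convex (m d : ℕ) (hm : 2 ≤ m) (hd : 2 ≤ d)
    (Q : Matrix (Fin m) (Fin m) ℝ)
    (hQoff : ∀ i j, i ≠ j → 0 ≤ Q i j)
    (hQrow : ∀ i, ∑ j, Q i j = 0)
    (hQirr : ∀ i j : Fin m, i ≠ j → ∃ n : ℕ, ∃ c : Fin (n + 1) → Fin m,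
      c 0 = i ∧ c (Fin.last n) = j ∧ ∀ r : Fin n, 0 < Q (c r.castSucc) (c r.succ))
    (v : Fin d → Fin m → ℝ)
    (γ : (Fin d → ℝ) → ℝ)
    (hγ : ∀ θ : Fin d → ℝ, IsGreatest
      (Complex.re '' spectrum ℂ
        ((Matrix.diagonal (fun i => ∑ k, θ k * v k i) + Q).map Complex.ofReal))
      (γ θ)) :
    ConvexOn ℝ Set.univ γ :=
  gamma_convex_general m d Q hQoff v γ hγ
end

section
/- The hyperplane perpendicular to v̄ through the origin supports the set Γ⁻ = {θ ∈ ℝ^d : γ(θ) < 0}: every θ ∈ ℝ^d with γ(θ) < 0 satisfies ⟨v̄, θ⟩ ≤ 0. -/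
/-!
Write `u = ∑ₖ θₖ vₖ` and `K = diag u + Q`. If `γ(θ) < 0`, the Metzler matrix `K` is Hurwitz, and
`-K⁻¹ 1 = ∑ₖ Pᵏ 1 / cᵏ⁺¹` with `P = K + c` entrywise nonnegative gives `h > 0` with `K h = -1`;
the series converges because, for `c` large, the spectrum of `P` lies in a disc of radius `< c`
and Gelfand's formula applies. Then `log x ≤ x - 1` gives `uᵢ ≤ -(Q log h)ᵢ`, and pairing with the
stationary `π` kills the right-hand side: `⟨v̄, θ⟩ = π ⬝ u ≤ -(π Q) ⬝ log h = 0`.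
-/

open Matrix Filter

section SpectralRadius

variable {A : Type*} [NormedRing A] [NormedAlgebra ℂ A]

theorem spectralRadius_algebraMap_add_lt {a : A} {ε R c : ℝ} (hε : 0 < ε)
    (hre : ∀ μ ∈ spectrum ℂ a, μ.re ≤ -ε) (hnorm : ∀ μ ∈ spectrum ℂ a, ‖μ‖ ≤ R)
    (hc : R ^ 2 < 2 * c * ε) :
    spectralRadius ℂ (algebraMap ℂ A c + a) < ENNReal.ofReal c := by
  have hc0 : 0 < c := by nlinarith [sq_nonneg R]
  have hbound : ∀ z ∈ spectrum ℂ (algebraMap ℂ A c + a),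
      ‖z‖ ≤ √(c ^ 2 - 2 * c * ε + R ^ 2) := by
    intro z hz
    rw [← spectrum.singleton_add_eq, Set.singleton_add] at hz
    obtain ⟨μ, hμ, rfl⟩ := hz
    have hsq : ‖(c : ℂ) + μ‖ ^ 2 = c ^ 2 + 2 * c * μ.re + ‖μ‖ ^ 2 := by
      simp only [Complex.sq_norm, Complex.normSq_apply, Complex.add_re, Complex.add_im,
        Complex.ofReal_re, Complex.ofReal_im]
      ring
    apply Real.le_sqrt_of_sq_le
    nlinarith [hre μ hμ, hnorm μ hμ, norm_nonneg μ]
  calc spectralRadius ℂ (algebraMap ℂ A c + a)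
      ≤ ENNReal.ofReal √(c ^ 2 - 2 * c * ε + R ^ 2) := iSup₂_le fun z hz => by
        rw [← enorm_eq_nnnorm, ← ofReal_norm]
        exact ENNReal.ofReal_le_ofReal (hbound z hz)
    _ < ENNReal.ofReal c :=
        (ENNReal.ofReal_lt_ofReal_iff hc0).2 ((Real.sqrt_lt' hc0).2 (by linarith))

theorem summable_norm_pow_div_pow_of_spectralRadius_lt [CompleteSpace A] {a : A} {c : ℝ}
    (ha : spectralRadius ℂ a < ENNReal.ofReal c) : Summable fun k : ℕ => ‖a ^ k‖ / c ^ k := by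
  obtain ⟨r, hr0, har, hrc⟩ := ENNReal.lt_iff_exists_real_btwn.1 ha
  obtain ⟨hrc, hc⟩ := ENNReal.ofReal_lt_ofReal_iff'.1 hrc
  have hpow : ∀ᶠ k : ℕ in atTop, ‖a ^ k‖ ≤ r ^ k := by
    filter_upwards [(spectrum.pow_norm_pow_one_div_tendsto_nhds_spectralRadius a)
      |>.eventually_lt_const har, eventually_ne_atTop 0] with k hk hk0
    rw [ENNReal.ofReal_lt_ofReal_iff_of_nonneg (by positivity), one_div] at hk
    rw [← Real.rpow_inv_natCast_pow (norm_nonneg _) hk0]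
    exact pow_le_pow_left₀ (by positivity) hk.le k
  refine (summable_geometric_of_lt_one (div_nonneg hr0 hc.le) ((div_lt_one hc).2 hrc))
    |>.of_norm_bounded_eventually_nat ?_
  filter_upwards [hpow] with k hk
  rw [Real.norm_of_nonneg (by positivity), div_pow]
  gcongr

end SpectralRadius

namespace Matrix

variable {n : Type*} [Fintype n]

section LinftyOpNorm

variable [DecidableEq n]

attribute [local instance] Matrix.linftyOpNormedAddCommGroup Matrix.linftyOpNormedRing
  Matrix.linftyOpNormedAlgebra

theorem linfty_opNorm_map_ofReal (M : Matrix n n ℝ) : ‖M.map Complex.ofReal‖ = ‖M‖ := by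
  simp only [linfty_opNorm_def, map_apply, Complex.nnnorm_real]

theorem exists_pos_mulVec_eq_smul_sub_one {P : Matrix n n ℝ} (hP : ∀ i j, 0 ≤ P i j) {c : ℝ}
    (hc : 0 < c) (hsum : Summable fun k : ℕ => ‖P ^ k‖ / c ^ k) :
    ∃ h : n → ℝ, (∀ i, 0 < h i) ∧ P *ᵥ h = c • h - 1 := by
  set s : ℕ → n → ℝ := fun k => (c⁻¹) ^ (k + 1) • (P ^ k *ᵥ 1) with hs_def
  have hs : Summable s := by
    refine (hsum.mul_left c⁻¹).of_norm_bounded fun k => ?_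
    have hone : ‖(1 : n → ℝ)‖ ≤ 1 := (pi_norm_le_iff_of_nonneg zero_le_one).2 fun _ => by simp
    calc ‖s k‖ = (c⁻¹) ^ (k + 1) * ‖P ^ k *ᵥ 1‖ := by
          rw [norm_smul, Real.norm_of_nonneg (by positivity)]
      _ ≤ (c⁻¹) ^ (k + 1) * ‖P ^ k‖ := by
          gcongr
          exact (linfty_opNorm_mulVec _ _).trans (mul_le_of_le_one_right (norm_nonneg _) hone)
      _ = c⁻¹ * (‖P ^ k‖ / c ^ k) := by ring
  have hs_nonneg : ∀ k, 0 ≤ s k := fun k i => by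
    simp only [hs_def, Pi.smul_apply, smul_eq_mul, mulVec, dotProduct, Pi.one_apply, mul_one]
    exact mul_nonneg (by positivity) (Finset.sum_nonneg fun j _ => pow_apply_nonneg hP k i j)
  have hs_succ : ∀ k, P *ᵥ s k = c • s (k + 1) := fun k => by
    simp only [hs_def, mulVec_smul, mulVec_mulVec, ← pow_succ', smul_smul, pow_succ _ (k + 1)]
    rw [mul_comm c, mul_assoc, inv_mul_cancel₀ hc.ne', mul_one]
  refine ⟨∑' k, s k, fun i => ?_, ?_⟩
  · calc 0 < s 0 i := by simp [hs_def, hc]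
      _ ≤ (∑' k, s k) i := hs.le_tsum 0 (fun k _ => hs_nonneg k) i
  · calc P *ᵥ ∑' k, s k = ∑' k, c • s (k + 1) := by
          change mulVecLin P _ = _
          rw [hs.map_tsum (mulVecLin P) (mulVecLin P).continuous_of_finiteDimensional]
          exact tsum_congr hs_succ
      _ = c • ∑' k, s k - 1 := by
          have hs0 : c • s 0 = 1 := by simp [hs_def, smul_smul, hc.ne']
          rw [tsum_const_smul'' c, hs.tsum_eq_zero_add, smul_add, hs0, add_sub_cancel_left]

theorem exists_pos_mulVec_eq_neg_one_of_re_spectrum_le (A : Matrix n n ℝ)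
    (hoff : ∀ i j, i ≠ j → 0 ≤ A i j) {ε : ℝ} (hε : 0 < ε)
    (hspec : ∀ μ ∈ spectrum ℂ (A.map Complex.ofReal), μ.re ≤ -ε) :
    ∃ h : n → ℝ, (∀ i, 0 < h i) ∧ A *ᵥ h = -1 := by
  set R := ‖A.map Complex.ofReal‖ * ‖(1 : Matrix n n ℂ)‖
  obtain ⟨c, hdiag, hcR⟩ : ∃ c : ℝ, (∀ i, -A i i ≤ c) ∧ R ^ 2 / (2 * ε) < c :=
    ((eventually_all.2 fun i => eventually_ge_atTop (-A i i)).and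
      (eventually_gt_atTop _)).exists
  rw [div_lt_iff₀ (by positivity), mul_left_comm, ← mul_assoc] at hcR
  have hc : 0 < c := by nlinarith [sq_nonneg R]
  set P := A + c • 1 with hP_def
  have hP : ∀ i j, 0 ≤ P i j := by
    intro i j
    rcases eq_or_ne i j with rfl | hij
    · simp only [hP_def, add_apply, smul_apply, one_apply_eq, smul_eq_mul, mul_one]
      linarith [hdiag i]
    · simpa [hP_def, one_apply_ne hij] using hoff i j hij
  have hPc : P.map Complex.ofReal = algebraMap ℂ _ (c : ℂ) + A.map Complex.ofReal := by
    ext i j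
    rcases eq_or_ne i j with rfl | hij
    · simp [hP_def, algebraMap_matrix_apply, add_comm]
    · simp [hP_def, one_apply_ne hij, algebraMap_matrix_apply, hij]
  have hρ := spectralRadius_algebraMap_add_lt hε hspec
    (fun μ hμ => mem_closedBall_zero_iff.1 (spectrum.subset_closedBall_norm_mul _ hμ)) hcR
  rw [← hPc] at hρ
  have hsum := summable_norm_pow_div_pow_of_spectralRadius_lt hρ
  have hpow : ∀ k : ℕ, P.map Complex.ofReal ^ k = (P ^ k).map Complex.ofReal :=
    fun k => (P.map_pow Complex.ofRealHom k).symm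
  simp only [hpow, linfty_opNorm_map_ofReal] at hsum
  obtain ⟨h, hpos, hPh⟩ := exists_pos_mulVec_eq_smul_sub_one hP hc hsum
  refine ⟨h, hpos, ?_⟩
  rw [show A = P - c • 1 by simp [hP_def], sub_mulVec, hPh, smul_mulVec, one_mulVec]
  abel

end LinftyOpNorm

section Generator

variable {Q : Matrix n n ℝ}

theorem mulVec_apply_eq_sum_mul_sub (hrow : ∀ i, ∑ j, Q i j = 0) (x : n → ℝ) (i : n) :
    (Q *ᵥ x) i = ∑ j, Q i j * (x j - x i) := by
  simp only [mul_sub, Finset.sum_sub_distrib, ← Finset.sum_mul, hrow, zero_mul, sub_zero]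
  rfl

theorem mulVec_log_le_mulVec_div (hoff : ∀ i j, i ≠ j → 0 ≤ Q i j)
    (hrow : ∀ i, ∑ j, Q i j = 0) {h : n → ℝ} (hpos : ∀ i, 0 < h i) (i : n) :
    (Q *ᵥ fun j => Real.log (h j)) i ≤ (Q *ᵥ h) i / h i := by
  rw [mulVec_apply_eq_sum_mul_sub hrow, mulVec_apply_eq_sum_mul_sub hrow, Finset.sum_div]
  refine Finset.sum_le_sum fun j _ => ?_
  rcases eq_or_ne i j with rfl | hij
  · simp
  rw [mul_div_assoc, sub_div, div_self (hpos i).ne', ← Real.log_div (hpos j).ne' (hpos i).ne']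
  exact mul_le_mul_of_nonneg_left (Real.log_le_sub_one_of_pos (div_pos (hpos j) (hpos i)))
    (hoff i j hij)

theorem dotProduct_le_zero_of_diagonal_add_mulVec_nonpos [DecidableEq n]
    (hoff : ∀ i j, i ≠ j → 0 ≤ Q i j) (hrow : ∀ i, ∑ j, Q i j = 0)
    {π : n → ℝ} (hπ : 0 ≤ π) (hπQ : π ᵥ* Q = 0) {u h : n → ℝ} (hpos : ∀ i, 0 < h i)
    (hsub : (diagonal u + Q) *ᵥ h ≤ 0) : π ⬝ᵥ u ≤ 0 := by
  have hu : u ≤ -(Q *ᵥ fun j => Real.log (h j)) := fun i => by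
    have hi : u i * h i + (Q *ᵥ h) i ≤ 0 := by simpa [add_mulVec, mulVec_diagonal] using hsub i
    have := mulVec_log_le_mulVec_div hoff hrow hpos i
    rw [le_div_iff₀ (hpos i)] at this
    exact le_neg_of_le_neg ((mul_le_mul_iff_left₀ (hpos i)).1 (by linarith))
  calc π ⬝ᵥ u ≤ π ⬝ᵥ -(Q *ᵥ fun j => Real.log (h j)) :=
        dotProduct_le_dotProduct_of_nonneg_left hu hπ
    _ = 0 := by rw [dotProduct_neg, dotProduct_mulVec, hπQ, zero_dotProduct, neg_zero]

end Generator

end Matrix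

theorem GammaMinus_supported_general (m d : ℕ)
    (Q : Matrix (Fin m) (Fin m) ℝ)
    (hQoff : ∀ i j, i ≠ j → 0 ≤ Q i j)
    (hQrow : ∀ i, ∑ j, Q i j = 0)
    (v : Fin d → Fin m → ℝ)
    (γ : (Fin d → ℝ) → ℝ)
    (hγ : ∀ θ : Fin d → ℝ, IsGreatest
      (Complex.re '' spectrum ℂ
        ((Matrix.diagonal (fun i => ∑ k, θ k * v k i) + Q).map Complex.ofReal))
      (γ θ))
    (π : Fin m → ℝ) (hπ0 : ∀ i, 0 ≤ π i)
    (hπQ : ∀ j, ∑ i, π i * Q i j = 0)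
    (vbar : Fin d → ℝ) (hvbar : ∀ k, vbar k = ∑ i, π i * v k i) :
    ∀ θ : Fin d → ℝ, γ θ < 0 → ∑ k, vbar k * θ k ≤ 0 := by
  intro θ hθ
  set u : Fin m → ℝ := fun i => ∑ k, θ k * v k i
  have hoff : ∀ i j, i ≠ j → 0 ≤ (diagonal u + Q) i j := fun i j hij => by
    simpa [diagonal_apply_ne _ hij] using hQoff i j hij
  obtain ⟨h, hpos, hAh⟩ := (diagonal u + Q).exists_pos_mulVec_eq_neg_one_of_re_spectrum_le hoff
    (neg_pos.2 hθ) fun μ hμ => by simpa using (hγ θ).2 ⟨μ, hμ, rfl⟩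
  have hvbar_θ : ∑ k, vbar k * θ k = π ⬝ᵥ u := by
    simp only [hvbar, dotProduct, u, Finset.sum_mul, Finset.mul_sum]
    rw [Finset.sum_comm]
    exact Finset.sum_congr rfl fun _ _ => Finset.sum_congr rfl fun _ _ => by ring
  rw [hvbar_θ]
  exact dotProduct_le_zero_of_diagonal_add_mulVec_nonpos hQoff hQrow hπ0 (funext hπQ) hpos
    (hAh ▸ fun i => by simp)

/-- The hyperplane through the origin perpendicular to `v̄` supports
`Γ⁻ = {θ : γ θ < 0}`: every `θ` with `γ θ < 0` satisfies `⟨v̄, θ⟩ ≤ 0`. -/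
theorem GammaMinus_supported (m d : ℕ) (hm : 2 ≤ m) (hd : 2 ≤ d)
    (Q : Matrix (Fin m) (Fin m) ℝ)
    (hQoff : ∀ i j, i ≠ j → 0 ≤ Q i j)
    (hQrow : ∀ i, ∑ j, Q i j = 0)
    (hQirr : ∀ i j : Fin m, i ≠ j → ∃ n : ℕ, ∃ c : Fin (n + 1) → Fin m,
      c 0 = i ∧ c (Fin.last n) = j ∧ ∀ r : Fin n, 0 < Q (c r.castSucc) (c r.succ))
    (v : Fin d → Fin m → ℝ)
    (γ : (Fin d → ℝ) → ℝ)
    (hγ : ∀ θ : Fin d → ℝ, IsGreatest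
      (Complex.re '' spectrum ℂ
        ((Matrix.diagonal (fun i => ∑ k, θ k * v k i) + Q).map Complex.ofReal))
      (γ θ))
    (π : Fin m → ℝ) (hπ0 : ∀ i, 0 ≤ π i) (hπ1 : ∑ i, π i = 1)
    (hπQ : ∀ j, ∑ i, π i * Q i j = 0)
    (vbar : Fin d → ℝ) (hvbar : ∀ k, vbar k = ∑ i, π i * v k i) :
    ∀ θ : Fin d → ℝ, γ θ < 0 → ∑ k, vbar k * θ k ≤ 0 :=
  GammaMinus_supported_general m d Q hQoff hQrow v γ hγ π hπ0 hπQ vbar hvbar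
end

section
/- If the stability condition holds, namely every entry of R⁻¹ v̄ is strictly negative, then there exists at least one index k ∈ {1,…,d} and some t > 0 such that γ(t e_k) < 0, where e_k is the k-th standard unit vector; that is, the nonnegative half line of the k-th coordinate axis intersects Γ⁻ = {θ : γ(θ) < 0} at a point other than the origin. -/
/-!
If `v̄ ≥ 0`, then `u = R⁻¹ v̄` satisfies `u = v̄ + Pᵀ u`, so `u ≥ (Pᵀ)ⁿ u → 0`, contradicting
stability; hence `v̄ₖ < 0` for some `k`. Irreducibility makes `ker Q` the constants, so the
Poisson equation `Q g = v̄ₖ 𝟙 - vₖ` is solvable (its right side is orthogonal to `π`). The positive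
vector `h = 𝟙 + t g` then satisfies `K(t eₖ) h = t v̄ₖ 𝟙 + O(t²) ≤ (t v̄ₖ / 3) h` for small `t > 0`,
and Gershgorin's theorem for `diag(h)⁻¹ K(t eₖ) diag(h)` gives `γ(t eₖ) ≤ t v̄ₖ / 3 < 0`.
-/

open Matrix Filter Topology

namespace Matrix

section Neumann

variable {ι : Type*} [Fintype ι] [DecidableEq ι] {A : Matrix ι ι ℝ}

theorem tendsto_pow_mulVec (hA : Tendsto (A ^ ·) atTop (𝓝 0)) (y : ι → ℝ) :
    Tendsto (fun n => A ^ n *ᵥ y) atTop (𝓝 0) := by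
  simpa [Function.comp_def] using
    ((continuous_id.matrix_mulVec continuous_const).tendsto 0).comp hA

theorem det_one_sub_ne_zero_of_tendsto_pow (hA : Tendsto (A ^ ·) atTop (𝓝 0)) :
    (1 - A).det ≠ 0 := by
  intro h0
  obtain ⟨y, hy0, hy⟩ := exists_mulVec_eq_zero_iff.mpr h0
  have hfix : ∀ n, A ^ n *ᵥ y = y := by
    have hAy : A *ᵥ y = y := by
      rwa [sub_mulVec, one_mulVec, sub_eq_zero, eq_comm] at hy
    intro n
    induction n with
    | zero => simp
    | succ n ih => rw [pow_succ, ← mulVec_mulVec, hAy, ih]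
  refine hy0 (tendsto_nhds_unique ?_ (tendsto_pow_mulVec hA y))
  simp [hfix]

theorem nonneg_of_one_sub_mulVec_nonneg (hA0 : ∀ i j, 0 ≤ A i j)
    (hA : Tendsto (A ^ ·) atTop (𝓝 0)) {u : ι → ℝ} (hu : ∀ i, 0 ≤ ((1 - A) *ᵥ u) i) (i : ι) :
    0 ≤ u i := by
  set y := (1 - A) *ᵥ u
  have hAu : A *ᵥ u = u - y := by simp [y, sub_mulVec]
  have hdecr : ∀ n, (A ^ n *ᵥ u) i ≤ u i := by
    intro n
    induction n with
    | zero => simp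
    | succ n ih =>
      have hy : 0 ≤ (A ^ n *ᵥ y) i :=
        Finset.sum_nonneg fun j _ => mul_nonneg (pow_apply_nonneg hA0 n i j) (hu j)
      rw [pow_succ, ← mulVec_mulVec, hAu, mulVec_sub, Pi.sub_apply]
      linarith
  exact le_of_tendsto' ((continuous_apply i).tendsto _ |>.comp (tendsto_pow_mulVec hA u)) hdecr

theorem exists_neg_of_inv_mulVec_neg [Nonempty ι] (hA0 : ∀ i j, 0 ≤ A i j)
    (hA : Tendsto (A ^ ·) atTop (𝓝 0)) {v : ι → ℝ} (hv : ∀ i, ((1 - A)⁻¹ *ᵥ v) i < 0) :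
    ∃ i, v i < 0 := by
  by_contra! hv0
  have hinv : (1 - A) *ᵥ ((1 - A)⁻¹ *ᵥ v) = v := by
    rw [mulVec_mulVec, mul_nonsing_inv _ (det_one_sub_ne_zero_of_tendsto_pow hA).isUnit,
      one_mulVec]
  obtain ⟨i⟩ := ‹Nonempty ι›
  exact (hv i).not_ge (nonneg_of_one_sub_mulVec_nonneg hA0 hA (by rwa [hinv]) i)

end Neumann

section Generator

variable {ι : Type*} [Fintype ι] {Q : Matrix ι ι ℝ}

theorem eq_of_mulVec_eq_zero_of_forall_le (hQoff : ∀ i j, i ≠ j → 0 ≤ Q i j)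
    (hQrow : ∀ i, ∑ j, Q i j = 0) {x : ι → ℝ} (hx : Q *ᵥ x = 0) {a b : ι}
    (hmax : ∀ j, x j ≤ x a) (hab : 0 < Q a b) : x b = x a := by
  have hsum : ∑ j, Q a j * (x j - x a) = 0 := by
    simp only [mul_sub, Finset.sum_sub_distrib, ← Finset.sum_mul, hQrow, zero_mul, sub_zero]
    exact congrFun hx a
  have hnonpos : ∀ j ∈ Finset.univ, Q a j * (x j - x a) ≤ 0 := fun j _ => by
    rcases eq_or_ne a j with rfl | hj
    · simp
    · exact mul_nonpos_of_nonneg_of_nonpos (hQoff a j hj) (sub_nonpos.mpr (hmax j))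
  have hb := (Finset.sum_eq_zero_iff_of_nonpos hnonpos).mp hsum b (Finset.mem_univ b)
  linarith [(mul_eq_zero.mp hb).resolve_left hab.ne']

theorem eq_of_mulVec_eq_zero (hQoff : ∀ i j, i ≠ j → 0 ≤ Q i j)
    (hQrow : ∀ i, ∑ j, Q i j = 0)
    (hQirr : ∀ i j : ι, i ≠ j → ∃ n : ℕ, ∃ c : Fin (n + 1) → ι,
      c 0 = i ∧ c (Fin.last n) = j ∧ ∀ r : Fin n, 0 < Q (c r.castSucc) (c r.succ))
    {x : ι → ℝ} (hx : Q *ᵥ x = 0) (i j : ι) : x i = x j := by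
  have : Nonempty ι := ⟨i⟩
  obtain ⟨a, -, ha⟩ := Finset.exists_max_image Finset.univ x Finset.univ_nonempty
  suffices hconst : ∀ b, x b = x a by rw [hconst i, hconst j]
  intro b
  rcases eq_or_ne a b with rfl | hab
  · rfl
  obtain ⟨n, c, hc0, hcn, hpos⟩ := hQirr a b hab
  suffices hchain : ∀ r, x (c r) = x a by rw [← hcn, hchain]
  intro r
  induction r using Fin.induction with
  | zero => rw [hc0]
  | succ r ih =>
    rw [← ih]
    exact eq_of_mulVec_eq_zero_of_forall_le hQoff hQrow hx
      (fun j => ih ▸ ha j (Finset.mem_univ j)) (hpos r)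

theorem exists_mulVec_eq_of_dotProduct_eq_zero (hQoff : ∀ i j, i ≠ j → 0 ≤ Q i j)
    (hQrow : ∀ i, ∑ j, Q i j = 0)
    (hQirr : ∀ i j : ι, i ≠ j → ∃ n : ℕ, ∃ c : Fin (n + 1) → ι,
      c 0 = i ∧ c (Fin.last n) = j ∧ ∀ r : Fin n, 0 < Q (c r.castSucc) (c r.succ))
    {π : ι → ℝ} (hπ1 : ∑ i, π i = 1) (hπQ : π ᵥ* Q = 0) {w : ι → ℝ} (hw : π ⬝ᵥ w = 0) :
    ∃ g, Q *ᵥ g = w := by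
  let L : Module.Dual ℝ (ι → ℝ) := dotProductBilin ℝ ℝ π
  have hL : L ≠ 0 := fun h0 => by
    simpa [L, dotProduct_one, hπ1] using LinearMap.congr_fun h0 1
  have hker : LinearMap.ker Q.mulVecLin ≤ ℝ ∙ 1 := fun x hx => by
    rw [Submodule.mem_span_singleton]
    rcases isEmpty_or_nonempty ι with _ | ⟨⟨i⟩⟩
    · exact ⟨0, Subsingleton.elim _ _⟩
    · exact ⟨x i, funext fun j => by
        simp [eq_of_mulVec_eq_zero hQoff hQrow hQirr (LinearMap.mem_ker.mp hx) j i]⟩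
  have hrange : LinearMap.range Q.mulVecLin ≤ LinearMap.ker L := by
    rintro _ ⟨x, rfl⟩
    simp [L, dotProduct_mulVec, hπQ]
  have hker_rank : Module.finrank ℝ (LinearMap.ker Q.mulVecLin) ≤ 1 :=
    (Submodule.finrank_mono hker).trans
      ((finrank_span_le_card (R := ℝ) ({1} : Set (ι → ℝ))).trans (by simp))
  have h₁ := LinearMap.finrank_range_add_finrank_ker Q.mulVecLin
  have h₂ := Module.Dual.finrank_ker_add_one_of_ne_zero hL
  have heq := Submodule.eq_of_le_of_finrank_le hrange (by omega)
  obtain ⟨g, hg⟩ : w ∈ LinearMap.range Q.mulVecLin := heq ▸ LinearMap.mem_ker.mpr hw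
  exact ⟨g, hg⟩

end Generator

section Spectrum

variable {ι : Type*} [Fintype ι] [DecidableEq ι]

theorem re_le_of_mulVec_le {K : Matrix ι ι ℝ} (hK : ∀ i j, i ≠ j → 0 ≤ K i j) {h : ι → ℝ}
    (hh : ∀ i, 0 < h i) {b : ℝ} (hKh : ∀ i, (K *ᵥ h) i ≤ b * h i) {μ : ℂ}
    (hμ : μ ∈ spectrum ℂ (K.map Complex.ofReal)) : μ.re ≤ b := by
  have hh' : ∀ i, (h i : ℂ) ≠ 0 := fun i => Complex.ofReal_ne_zero.mpr (hh i).ne'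
  let D : (Matrix ι ι ℂ)ˣ :=
    ⟨diagonal (fun i => (h i : ℂ)), diagonal (fun i => (h i : ℂ)⁻¹),
      by simp [diagonal_mul_diagonal, hh'], by simp [diagonal_mul_diagonal, hh']⟩
  let B : Matrix ι ι ℝ := of fun i j => K i j * h j / h i
  have hB : B.map Complex.ofReal =
      (↑D⁻¹ : Matrix ι ι ℂ) * K.map Complex.ofReal * (D : Matrix ι ι ℂ) := by
    ext i j
    simp [B, D, diagonal_mul, mul_diagonal, Units.inv_mk]
    ring
  rw [← spectrum.units_conjugate' (u := D), ← hB, ← Matrix.spectrum_toLin',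
    ← Module.End.hasEigenvalue_iff_mem_spectrum] at hμ
  obtain ⟨i, hi⟩ := eigenvalue_mem_ball hμ
  rw [Metric.mem_closedBall, Complex.dist_eq] at hi
  have hrow : (K *ᵥ h) i / h i = K i i + ∑ j ∈ Finset.univ.erase i, K i j * h j / h i := by
    rw [mulVec, dotProduct, ← Finset.add_sum_erase _ _ (Finset.mem_univ i), add_div,
      Finset.sum_div, mul_div_cancel_right₀ _ (hh i).ne']
  have hoff : ∑ j ∈ Finset.univ.erase i, ‖B.map Complex.ofReal i j‖ =
      ∑ j ∈ Finset.univ.erase i, K i j * h j / h i :=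
    Finset.sum_congr rfl fun j hj => by
      simp [B, abs_of_nonneg, hK i j (Finset.ne_of_mem_erase hj).symm, (hh i).le, (hh j).le]
  calc μ.re = (B i i : ℂ).re + (μ - B i i).re := by simp
    _ ≤ K i i + ‖μ - B i i‖ := by
        gcongr
        · simp [B, (hh i).ne']
        · exact Complex.re_le_norm _
    _ ≤ (K *ᵥ h) i / h i := by
        rw [hrow, ← hoff]
        simpa using hi
    _ ≤ b := by rw [div_le_iff₀ (hh i)]; exact hKh i

theorem exists_pos_forall_re_spectrum_diagonal_smul_add_neg {Q : Matrix ι ι ℝ}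
    (hQoff : ∀ i j, i ≠ j → 0 ≤ Q i j) (hQrow : ∀ i, ∑ j, Q i j = 0)
    {v g : ι → ℝ} {c : ℝ} (hc : c < 0) (hg : Q *ᵥ g = fun i => c - v i) :
    ∃ t : ℝ, 0 < t ∧ ∀ μ ∈ spectrum ℂ ((diagonal (t • v) + Q).map Complex.ofReal), μ.re < 0 := by
  have hsmall : ∀ᶠ t in 𝓝[>] (0 : ℝ),
      0 < t ∧ ∀ i, |t * g i| ≤ 1 / 2 ∧ t * (v i * g i) ≤ -c / 2 := by
    have hlim : ∀ a : ℝ, Tendsto (fun t => t * a) (𝓝 0) (𝓝 0) := fun a => by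
      simpa using (tendsto_id (x := 𝓝 (0 : ℝ))).mul_const a
    refine eventually_mem_nhdsWithin.and (nhdsWithin_le_nhds (eventually_all.2 fun i => ?_))
    refine (Tendsto.eventually_le_const (show (0 : ℝ) < 1 / 2 by norm_num) ?_).and
      ((hlim _).eventually_le_const (by linarith))
    simpa using (hlim (g i)).abs
  obtain ⟨t, ht, hsmall⟩ := hsmall.exists
  have hQ1 : Q *ᵥ 1 = 0 := funext fun i => by simp [mulVec, dotProduct, hQrow]
  have hpos : ∀ i, 0 < (1 + t • g) i := fun i => by
    have := (abs_le.mp (hsmall i).1).1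
    simp only [Pi.add_apply, Pi.one_apply, Pi.smul_apply, smul_eq_mul]
    linarith
  have hbound : ∀ i, ((diagonal (t • v) + Q) *ᵥ (1 + t • g)) i ≤ t * c / 3 * (1 + t • g) i := by
    intro i
    obtain ⟨hgi, hvgi⟩ := hsmall i
    have hgi' := (abs_le.mp hgi).2
    simp only [add_mulVec, mulVec_diagonal, mulVec_add, mulVec_smul, hQ1, hg, Pi.add_apply,
      Pi.smul_apply, Pi.one_apply, Pi.zero_apply, smul_eq_mul]
    nlinarith [mul_le_mul_of_nonneg_left hvgi ht.le,
      mul_le_mul_of_nonpos_left hgi' (by nlinarith : t * c / 3 ≤ 0)]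
  refine ⟨t, ht, fun μ hμ => (re_le_of_mulVec_le ?_ hpos hbound hμ).trans_lt ?_⟩
  · intro i j hij
    simpa [diagonal_apply_ne _ hij] using hQoff i j hij
  · nlinarith

end Spectrum

end Matrix

theorem axis_intersects_GammaMinus_general (m d : ℕ) (hd : 2 ≤ d)
    (Q : Matrix (Fin m) (Fin m) ℝ)
    (hQoff : ∀ i j, i ≠ j → 0 ≤ Q i j)
    (hQrow : ∀ i, ∑ j, Q i j = 0)
    (hQirr : ∀ i j : Fin m, i ≠ j → ∃ n : ℕ, ∃ c : Fin (n + 1) → Fin m,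
      c 0 = i ∧ c (Fin.last n) = j ∧ ∀ r : Fin n, 0 < Q (c r.castSucc) (c r.succ))
    (v : Fin d → Fin m → ℝ)
    (γ : (Fin d → ℝ) → ℝ)
    (hγ : ∀ θ : Fin d → ℝ, IsGreatest
      (Complex.re '' spectrum ℂ
        ((Matrix.diagonal (fun i => ∑ k, θ k * v k i) + Q).map Complex.ofReal))
      (γ θ))
    (π : Fin m → ℝ) (hπ1 : ∑ i, π i = 1)
    (hπQ : ∀ j, ∑ i, π i * Q i j = 0)
    (vbar : Fin d → ℝ) (hvbar : ∀ k, vbar k = ∑ i, π i * v k i)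
    (P : Matrix (Fin d) (Fin d) ℝ) (hP : ∀ k l, 0 ≤ P k l)
    (hPn : Tendsto (fun n => P ^ n) atTop (nhds 0))
    (R : Matrix (Fin d) (Fin d) ℝ) (hR : R = 1 - Pᵀ)
    (hstab : ∀ k, (R⁻¹ *ᵥ vbar) k < 0) :
    ∃ k : Fin d, ∃ t : ℝ, 0 < t ∧ γ (t • (Pi.single k 1 : Fin d → ℝ)) < 0 := by
  have : Nonempty (Fin d) := ⟨⟨0, by omega⟩⟩
  have hPTn : Tendsto (fun n => Pᵀ ^ n) atTop (𝓝 0) := by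
    simpa [Function.comp_def, transpose_pow] using
      (continuous_id.matrix_transpose.tendsto 0).comp hPn
  obtain ⟨k, hk⟩ := exists_neg_of_inv_mulVec_neg (fun i j => hP j i) hPTn (hR ▸ hstab)
  have hw : π ⬝ᵥ (fun i => vbar k - v k i) = 0 := by
    simp [dotProduct, mul_sub, ← Finset.sum_mul, hπ1, hvbar]
  obtain ⟨g, hg⟩ := exists_mulVec_eq_of_dotProduct_eq_zero hQoff hQrow hQirr hπ1 (funext hπQ) hw
  obtain ⟨t, ht, hre⟩ := exists_pos_forall_re_spectrum_diagonal_smul_add_neg hQoff hQrow hk hg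
  obtain ⟨μ, hμ, hμγ⟩ := (hγ (t • Pi.single k 1)).1
  have hdiag : (fun i => ∑ l, (t • (Pi.single k 1 : Fin d → ℝ)) l * v l i) = t • v k := by
    ext i
    simp [Pi.single_apply]
  rw [hdiag] at hμ
  exact ⟨k, t, ht, hμγ ▸ hre μ hμ⟩

/-- under the stability condition `R⁻¹ v̄ < 0` (entrywise), there is at least
one coordinate axis whose nonnegative half line intersects `Γ⁻ = {θ : γ θ < 0}` at a point
other than the origin, i.e. `γ (t • e_k) < 0` for some `k` and some `t > 0`. -/
theorem axis_intersects_GammaMinus (m d : ℕ) (hm : 2 ≤ m) (hd : 2 ≤ d)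
    (Q : Matrix (Fin m) (Fin m) ℝ)
    (hQoff : ∀ i j, i ≠ j → 0 ≤ Q i j)
    (hQrow : ∀ i, ∑ j, Q i j = 0)
    (hQirr : ∀ i j : Fin m, i ≠ j → ∃ n : ℕ, ∃ c : Fin (n + 1) → Fin m,
      c 0 = i ∧ c (Fin.last n) = j ∧ ∀ r : Fin n, 0 < Q (c r.castSucc) (c r.succ))
    (v : Fin d → Fin m → ℝ)
    (γ : (Fin d → ℝ) → ℝ)
    (hγ : ∀ θ : Fin d → ℝ, IsGreatest
      (Complex.re '' spectrum ℂ
        ((Matrix.diagonal (fun i => ∑ k, θ k * v k i) + Q).map Complex.ofReal))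
      (γ θ))
    (π : Fin m → ℝ) (hπ0 : ∀ i, 0 ≤ π i) (hπ1 : ∑ i, π i = 1)
    (hπQ : ∀ j, ∑ i, π i * Q i j = 0)
    (vbar : Fin d → ℝ) (hvbar : ∀ k, vbar k = ∑ i, π i * v k i)
    (P : Matrix (Fin d) (Fin d) ℝ) (hP : ∀ k l, 0 ≤ P k l)
    (hPn : Tendsto (fun n => P ^ n) atTop (nhds 0))
    (R : Matrix (Fin d) (Fin d) ℝ) (hR : R = 1 - Pᵀ)
    (hstab : ∀ k, (R⁻¹ *ᵥ vbar) k < 0) :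
    ∃ k : Fin d, ∃ t : ℝ, 0 < t ∧ γ (t • (Pi.single k 1 : Fin d → ℝ)) < 0 :=
  axis_intersects_GammaMinus_general m d hd Q hQoff hQrow hQirr v γ hγ π hπ1 hπQ vbar hvbar P hP hPn
    R hR hstab
end

section
/- Let v ∈ ℝ^d satisfy (R⁻¹ v)_k < 0 for every k. Then for every proper subset A of {1,…,d} (so the complement A^c is nonempty), the submatrix R_{A,A} of R with rows and columns indexed by A is invertible, and there exists an index k ∈ A^c such that v_k + ((Pᵗ)_{A^c,A} (R_{A,A})^{-1} v_A)_k < 0, where v_A is the subvector of v indexed by A and (Pᵗ)_{A^c,A} is the submatrix of Pᵗ with rows indexed by A^c and columns indexed by A. -/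
/-!
Write `Q = Pᵀ`. If `(1 - Q) x = 0` then `x = Qⁿ x → 0`, so `R = 1 - Q` is invertible, and
`R⁻¹ = ∑ Qⁿ ≥ 0` entrywise. The powers of the principal submatrix `Q_{AA}` are dominated by those
of `Q`, so `R_{AA} = 1 - Q_{AA}` is invertible as well.

If the modified drift were nonnegative on all of `Aᶜ`, the vector `x` equal to `R_{AA}⁻¹ v_A` on `A`
and to `0` off `A` would satisfy `R x ≤ v` (with equality on `A`), hence `x ≤ R⁻¹ v` since
`R⁻¹ ≥ 0`. At a coordinate `k ∉ A` this reads `0 ≤ (R⁻¹ v)_k < 0`.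
-/

open Filter Finset Function Matrix Topology

namespace Matrix

variable {ι : Type*} [Fintype ι] [DecidableEq ι]

theorem isUnit_one_sub_of_tendsto_pow_zero {K : Type*} [Field K] [TopologicalSpace K]
    [IsTopologicalRing K] [T2Space K] {Q : Matrix ι ι K}
    (hQ : Tendsto (Q ^ ·) atTop (𝓝 0)) : IsUnit (1 - Q) := by
  rw [isUnit_iff_isUnit_det, isUnit_iff_ne_zero, Ne, ← exists_mulVec_eq_zero_iff]
  rintro ⟨x, hx0, hx⟩
  have hfix : ∀ n, Q ^ n *ᵥ x = x := fun n => by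
    induction n with
    | zero => simp
    | succ n ih =>
      rw [sub_mulVec, one_mulVec, sub_eq_zero] at hx
      rw [pow_succ, ← mulVec_mulVec, ← hx, ih]
  have hlim : Tendsto (fun n => Q ^ n *ᵥ x) atTop (𝓝 0) := by
    simpa [Function.comp_def] using
      ((continuous_id.matrix_mulVec continuous_const).tendsto 0).comp hQ
  exact hx0 (tendsto_nhds_unique (by simpa only [hfix] using tendsto_const_nhds) hlim)
theorem pow_submatrix_apply_le {K κ : Type*} [Semiring K] [PartialOrder K] [IsOrderedRing K]
    [Fintype κ] [DecidableEq κ] {Q : Matrix ι ι K} (hQ : ∀ i j, 0 ≤ Q i j)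
    {f : κ → ι} (hf : Injective f) (n : ℕ) (a b : κ) :
    (Q.submatrix f f ^ n) a b ≤ (Q ^ n) (f a) (f b) := by
  induction n generalizing b with
  | zero => rw [pow_zero, pow_zero, ← submatrix_one f hf]; exact le_rfl
  | succ n ih =>
    rw [pow_succ, pow_succ, mul_apply, mul_apply]
    calc ∑ c, (Q.submatrix f f ^ n) a c * Q (f c) (f b)
        ≤ ∑ c, (Q ^ n) (f a) (f c) * Q (f c) (f b) :=
          sum_le_sum fun c _ => mul_le_mul_of_nonneg_right (ih c) (hQ _ _)
      _ = ∑ j ∈ univ.map ⟨f, hf⟩, (Q ^ n) (f a) j * Q j (f b) := by rw [sum_map]; rfl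
      _ ≤ ∑ j, (Q ^ n) (f a) j * Q j (f b) :=
          sum_le_univ_sum_of_nonneg fun j => mul_nonneg (pow_apply_nonneg hQ n _ _) (hQ _ _)

section OrderedField

variable {K : Type*} [Field K] [LinearOrder K] [IsStrictOrderedRing K] [TopologicalSpace K]
  [OrderTopology K] {Q : Matrix ι ι K}

theorem tendsto_sum_range_pow_inv_one_sub (hQ : Tendsto (Q ^ ·) atTop (𝓝 0)) :
    Tendsto (fun N => ∑ i ∈ range N, Q ^ i) atTop (𝓝 (1 - Q)⁻¹) := by
  have hdet : IsUnit (1 - Q).det :=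
    (isUnit_iff_isUnit_det _).1 (isUnit_one_sub_of_tendsto_pow_zero hQ)
  have hsum : ∀ N, ∑ i ∈ range N, Q ^ i = (1 - Q)⁻¹ * (1 - Q ^ N) := fun N => by
    rw [← mul_neg_geom_sum, nonsing_inv_mul_cancel_left _ _ hdet]
  have hlim := (tendsto_const_nhds (x := (1 - Q)⁻¹)).mul
    ((tendsto_const_nhds (x := (1 : Matrix ι ι K))).sub hQ)
  rw [sub_zero, mul_one] at hlim
  simpa only [hsum] using hlim

theorem inv_one_sub_apply_nonneg (hQ : ∀ i j, 0 ≤ Q i j)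
    (hQn : Tendsto (Q ^ ·) atTop (𝓝 0)) (i j : ι) : 0 ≤ (1 - Q)⁻¹ i j := by
  have hij := tendsto_pi_nhds.1 (tendsto_pi_nhds.1 (tendsto_sum_range_pow_inv_one_sub hQn) i) j
  refine ge_of_tendsto' hij fun N => ?_
  rw [sum_apply]
  exact sum_nonneg fun k _ => pow_apply_nonneg hQ k i j

theorem tendsto_pow_submatrix_zero {κ : Type*} [Fintype κ] [DecidableEq κ] (hQ : ∀ i j, 0 ≤ Q i j)
    (hQn : Tendsto (Q ^ ·) atTop (𝓝 0)) {f : κ → ι} (hf : Injective f) :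
    Tendsto (Q.submatrix f f ^ ·) atTop (𝓝 0) := by
  refine tendsto_pi_nhds.2 fun a => tendsto_pi_nhds.2 fun b => ?_
  have hfab : Tendsto (fun n => (Q ^ n) (f a) (f b)) atTop (𝓝 0) :=
    tendsto_pi_nhds.1 (tendsto_pi_nhds.1 hQn (f a)) (f b)
  exact tendsto_of_tendsto_of_tendsto_of_le_of_le tendsto_const_nhds hfab
    (fun n => pow_apply_nonneg (fun _ _ => hQ _ _) n a b) (pow_submatrix_apply_le hQ hf · a b)

theorem isUnit_one_sub_submatrix {κ : Type*} [Fintype κ] [DecidableEq κ] (hQ : ∀ i j, 0 ≤ Q i j)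
    (hQn : Tendsto (Q ^ ·) atTop (𝓝 0)) {f : κ → ι} (hf : Injective f) :
    IsUnit ((1 - Q).submatrix f f) := by
  have hsub : (1 - Q).submatrix f f = 1 - Q.submatrix f f := by
    rw [← submatrix_one f hf]; rfl
  exact hsub ▸ isUnit_one_sub_of_tendsto_pow_zero (tendsto_pow_submatrix_zero hQ hQn hf)

end OrderedField

theorem le_inv_mulVec_of_mulVec_le {K : Type*} [CommRing K] [PartialOrder K] [IsOrderedRing K]
    {R : Matrix ι ι K} (hR : IsUnit R.det) (hR' : ∀ i j, 0 ≤ R⁻¹ i j) {x v : ι → K}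
    (hx : R *ᵥ x ≤ v) : x ≤ R⁻¹ *ᵥ v := by
  have hdiff : R⁻¹ *ᵥ v - x = R⁻¹ *ᵥ (v - R *ᵥ x) := by
    rw [mulVec_sub, mulVec_mulVec, nonsing_inv_mul _ hR, one_mulVec]
  have hy : ∀ j, 0 ≤ (v - R *ᵥ x) j := fun j => sub_nonneg.2 (hx j)
  intro i
  have hi : 0 ≤ (R⁻¹ *ᵥ (v - R *ᵥ x)) i :=
    sum_nonneg fun j _ => mul_nonneg (hR' i j) (hy j)
  rw [← hdiff] at hi
  exact sub_nonneg.1 hi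

theorem mulVec_extend_zero_comp {K l m n κ : Type*} [NonUnitalNonAssocSemiring K] [Fintype n]
    [Fintype κ] (M : Matrix m n K) {f : κ → n} (hf : Injective f) (u : κ → K) (g : l → m) :
    (M *ᵥ extend f u 0) ∘ g = M.submatrix g f *ᵥ u := by
  funext b
  simp only [mulVec, dotProduct, submatrix_apply]
  refine (Fintype.sum_of_injective f hf _ _ (fun j hj => ?_) fun a => by rw [hf.extend_apply]).symm
  rw [extend_apply' _ _ _ (by simpa using hj), Pi.zero_apply, mul_zero]

theorem exists_sub_submatrix_mulVec_neg {K κ μ : Type*} [CommRing K] [LinearOrder K]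
    [IsOrderedRing K] [Fintype κ] [DecidableEq κ] {R : Matrix ι ι K} (hR : IsUnit R.det)
    (hR' : ∀ i j, 0 ≤ R⁻¹ i j) {v : ι → K} (hv : ∀ i, (R⁻¹ *ᵥ v) i < 0) {f : κ → ι}
    (hf : Injective f) (hf' : ¬Surjective f) (hRf : IsUnit (R.submatrix f f).det) {g : μ → ι}
    (hfg : ∀ i, i ∉ Set.range f → i ∈ Set.range g) :
    ∃ k, v (g k) - (R.submatrix g f *ᵥ (R.submatrix f f)⁻¹ *ᵥ (v ∘ f)) k < 0 := by
  by_contra! h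
  set w := (R.submatrix f f)⁻¹ *ᵥ (v ∘ f)
  have hRx : R *ᵥ extend f w 0 ≤ v := by
    intro i
    by_cases hi : i ∈ Set.range f
    · obtain ⟨a, rfl⟩ := hi
      refine le_of_eq ?_
      calc (R *ᵥ extend f w 0) (f a) = (R.submatrix f f *ᵥ w) a :=
            congrFun (mulVec_extend_zero_comp R hf w f) a
        _ = v (f a) := by rw [mulVec_mulVec, mul_nonsing_inv _ hRf, one_mulVec]; rfl
    · obtain ⟨k, rfl⟩ := hfg _ hi
      calc (R *ᵥ extend f w 0) (g k) = (R.submatrix g f *ᵥ w) k :=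
            congrFun (mulVec_extend_zero_comp R hf w g) k
        _ ≤ v (g k) := sub_nonneg.1 (h k)
  obtain ⟨i, hi⟩ := not_forall.1 hf'
  have hwi := le_inv_mulVec_of_mulVec_le hR hR' hRx i
  rw [extend_apply' _ _ _ hi, Pi.zero_apply] at hwi
  exact (hv i).not_ge hwi

end Matrix

theorem modified_drift_negative_general (d : ℕ)
    (P : Matrix (Fin d) (Fin d) ℝ) (hP : ∀ k l, 0 ≤ P k l)
    (hPn : Tendsto (fun n => P ^ n) atTop (nhds 0))
    (R : Matrix (Fin d) (Fin d) ℝ) (hR : R = 1 - Pᵀ)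
    (v : Fin d → ℝ) (hv : ∀ k, (R⁻¹ *ᵥ v) k < 0)
    (A : Finset (Fin d)) (hA : A ≠ Finset.univ) :
    IsUnit (R.submatrix (fun a : {x : Fin d // x ∈ A} => (a : Fin d))
      (fun a : {x : Fin d // x ∈ A} => (a : Fin d))) ∧
    ∃ k : {x : Fin d // x ∉ A},
      v (k : Fin d) +
        ((Pᵀ).submatrix (fun b : {x : Fin d // x ∉ A} => (b : Fin d))
            (fun a : {x : Fin d // x ∈ A} => (a : Fin d)) *ᵥ
          ((R.submatrix (fun a : {x : Fin d // x ∈ A} => (a : Fin d))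
              (fun a : {x : Fin d // x ∈ A} => (a : Fin d)))⁻¹ *ᵥ
            (fun a : {x : Fin d // x ∈ A} => v (a : Fin d)))) k < 0 := by
  have hQ : ∀ i j, 0 ≤ Pᵀ i j := fun i j => hP j i
  have hQn : Tendsto (Pᵀ ^ ·) atTop (𝓝 0) := by
    simpa [Function.comp_def, transpose_pow] using
      (continuous_id.matrix_transpose.tendsto 0).comp hPn
  have hunit : IsUnit (R.submatrix (Subtype.val : A → Fin d) (Subtype.val : A → Fin d)) :=
    hR ▸ isUnit_one_sub_submatrix hQ hQn Subtype.val_injective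
  have hRAc : R.submatrix (Subtype.val : {x // x ∉ A} → Fin d) (Subtype.val : A → Fin d)
      = -Pᵀ.submatrix Subtype.val Subtype.val := by
    ext k a
    have hka : (k : Fin d) ≠ a := fun h => k.2 (h ▸ a.2)
    simp [hR, one_apply_ne hka]
  refine ⟨hunit, ?_⟩
  obtain ⟨k, hk⟩ := exists_sub_submatrix_mulVec_neg
    ((isUnit_iff_isUnit_det _).1 (hR ▸ isUnit_one_sub_of_tendsto_pow_zero hQn))
    (hR ▸ inv_one_sub_apply_nonneg hQ hQn) hv Subtype.val_injective
    (fun hs => hA (eq_univ_of_forall fun i => by obtain ⟨a, rfl⟩ := hs i; exact a.2))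
    ((isUnit_iff_isUnit_det _).1 hunit) (g := (Subtype.val : {x // x ∉ A} → Fin d))
    fun i hi => ⟨⟨i, fun h => hi ⟨⟨i, h⟩, rfl⟩⟩, rfl⟩
  refine ⟨k, ?_⟩
  rwa [hRAc, neg_mulVec, Pi.neg_apply, sub_neg_eq_add] at hk

/-- linear-algebra core of Lemma 5.1: if `R⁻¹ v < 0` entrywise, then for every
proper subset `A` of the coordinates, the principal submatrix `R_{A,A}` is invertible and
there is a coordinate `k ∉ A` with `v_k + ((Pᵗ)_{Aᶜ,A} (R_{A,A})⁻¹ v_A)_k < 0`. -/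
theorem modified_drift_negative (d : ℕ) (hd : 2 ≤ d)
    (P : Matrix (Fin d) (Fin d) ℝ) (hP : ∀ k l, 0 ≤ P k l)
    (hPn : Tendsto (fun n => P ^ n) atTop (nhds 0))
    (R : Matrix (Fin d) (Fin d) ℝ) (hR : R = 1 - Pᵀ)
    (v : Fin d → ℝ) (hv : ∀ k, (R⁻¹ *ᵥ v) k < 0)
    (A : Finset (Fin d)) (hA : A ≠ Finset.univ) :
    IsUnit (R.submatrix (fun a : {x : Fin d // x ∈ A} => (a : Fin d))
      (fun a : {x : Fin d // x ∈ A} => (a : Fin d))) ∧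
    ∃ k : {x : Fin d // x ∉ A},
      v (k : Fin d) +
        ((Pᵀ).submatrix (fun b : {x : Fin d // x ∉ A} => (b : Fin d))
            (fun a : {x : Fin d // x ∈ A} => (a : Fin d)) *ᵥ
          ((R.submatrix (fun a : {x : Fin d // x ∈ A} => (a : Fin d))
              (fun a : {x : Fin d // x ∈ A} => (a : Fin d)))⁻¹ *ᵥ
            (fun a : {x : Fin d // x ∈ A} => v (a : Fin d)))) k < 0 :=
  modified_drift_negative_general d P hP hPn R hR v hv A hA
end

section
/- Let P = (p_{kℓ}) be a d×d entrywise nonnegative real matrix with row sums at most 1, and let w ∈ ℝ^d be a probability vector (w_ℓ ≥ 0, Σ_ℓ w_ℓ = 1). Define the (d+1)×(d+1) matrix P̄, indexed by {0, 1, …, d}, by P̄_{kℓ} = p_{kℓ} for k, ℓ ≥ 1, P̄_{k0} = 1 − Σ_{ℓ=1}^d p_{kℓ} for k ≥ 1, P̄_{00} = 0, and P̄_{0ℓ} = w_ℓ for ℓ ≥ 1. If P̄ is irreducible, i.e., for all i, j ∈ {0, …, d} there exists n ≥ 1 with (P̄^n)_{ij} > 0, then P^n converges entrywise to the zero matrix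 as n → ∞. -/
open Matrix Filter

/-!
Adjoining the outside node makes `P̄` row-stochastic, and `P ^ n` is dominated entrywise by the
block of `P̄ ^ n` away from `0`, so the `k`-th row sum of `P ^ n` is at most `1 - (P̄ ^ n) (k+1) 0`.
Irreducibility makes this `< 1` for some `n`. Row sums of powers of a substochastic matrix are
antitone in `n`, so a single `N` works for all rows, i.e. `‖P ^ N‖ < 1` in the `ℓ∞` operator norm;
together with `‖P‖ ≤ 1` this forces `P ^ n → 0`.
-/

theorem tendsto_pow_atTop_nhds_zero_of_norm_le_one_of_norm_pow_lt_one {R : Type*}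
    [SeminormedRing R] {a : R} (ha : ‖a‖ ≤ 1) {N : ℕ} (hN : 0 < N) (haN : ‖a ^ N‖ < 1) :
    Tendsto (a ^ ·) atTop (nhds 0) := by
  have hanti : Antitone fun n ↦ ‖a ^ n‖ := antitone_nat_of_succ_le fun n ↦ by
    rw [pow_succ]
    exact (norm_mul_le _ _).trans (mul_le_of_le_one_right (norm_nonneg _) ha)
  rw [tendsto_zero_iff_norm_tendsto_zero,
    tendsto_iff_tendsto_subseq_of_antitone hanti (tendsto_id.const_mul_atTop' hN)]
  simpa [Function.comp_def, pow_mul] using (tendsto_pow_atTop_nhds_zero_of_norm_lt_one haN).norm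

namespace Matrix

variable {ι κ R : Type*} [Fintype ι] [Fintype κ]

section OrderedSemiring

variable [DecidableEq ι] [Semiring R] [PartialOrder R] [IsOrderedRing R] {A : Matrix ι ι R}

theorem antitone_sum_pow_apply (hA : ∀ i j, 0 ≤ A i j) (hA1 : ∀ i, ∑ j, A i j ≤ 1) (i : ι) :
    Antitone fun n ↦ ∑ j, (A ^ n) i j := antitone_nat_of_succ_le fun n ↦ by
  simp only [pow_succ, mul_apply]
  rw [Finset.sum_comm]
  simp_rw [← Finset.mul_sum]
  exact Finset.sum_le_sum fun k _ ↦ mul_le_of_le_one_right (pow_apply_nonneg hA n i k) (hA1 k)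

theorem pow_submatrix_apply_le_s16 [DecidableEq κ] (hA : ∀ i j, 0 ≤ A i j) {f : κ → ι}
    (hf : f.Injective) (n : ℕ) (i j : κ) :
    ((A.submatrix f f) ^ n) i j ≤ (A ^ n) (f i) (f j) := by
  induction n generalizing j with
  | zero => rw [pow_zero, pow_zero, ← submatrix_one f hf, submatrix_apply]
  | succ n ih =>
    simp only [pow_succ, mul_apply, submatrix_apply]
    calc ∑ k, (A.submatrix f f ^ n) i k * A (f k) (f j)
        ≤ ∑ k, (A ^ n) (f i) (f k) * A (f k) (f j) :=
          Finset.sum_le_sum fun k _ ↦ mul_le_mul_of_nonneg_right (ih k) (hA _ _)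
      _ = ∑ m ∈ Finset.univ.map ⟨f, hf⟩, (A ^ n) (f i) m * A m (f j) := by
          rw [Finset.sum_map]; rfl
      _ ≤ ∑ m, (A ^ n) (f i) m * A m (f j) :=
          Finset.sum_le_univ_sum_of_nonneg fun m ↦
            mul_nonneg (pow_apply_nonneg hA n _ _) (hA _ _)

end OrderedSemiring

section OrderedRing

variable [Ring R] [PartialOrder R] [IsOrderedRing R] {d : ℕ}

theorem mem_rowStochastic_of_succ_succ {P : Matrix (Fin d) (Fin d) R} (hP : ∀ k l, 0 ≤ P k l)
    (hProw : ∀ k, ∑ l, P k l ≤ 1) {w : Fin d → R} (hw0 : ∀ l, 0 ≤ w l) (hw1 : ∑ l, w l = 1)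
    {Pbar : Matrix (Fin (d + 1)) (Fin (d + 1)) R} (hPbar00 : Pbar 0 0 = 0)
    (hPbar0succ : ∀ l : Fin d, Pbar 0 l.succ = w l)
    (hPbarsucc0 : ∀ k : Fin d, Pbar k.succ 0 = 1 - ∑ l, P k l)
    (hPbarsucc : ∀ k l : Fin d, Pbar k.succ l.succ = P k l) :
    Pbar ∈ rowStochastic R (Fin (d + 1)) := by
  refine mem_rowStochastic_iff_sum.2 ⟨fun i j ↦ ?_, fun i ↦ ?_⟩
  · cases i using Fin.cases <;> cases j using Fin.cases
    · exact hPbar00.ge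
    · exact (hw0 _).trans_eq (hPbar0succ _).symm
    · exact (sub_nonneg.2 (hProw _)).trans_eq (hPbarsucc0 _).symm
    · exact (hP _ _).trans_eq (hPbarsucc _ _).symm
  · cases i using Fin.cases <;> simp [Fin.sum_univ_succ, *]

theorem sum_pow_submatrix_succ_apply_le {A : Matrix (Fin (d + 1)) (Fin (d + 1)) R}
    (hA : A ∈ rowStochastic R (Fin (d + 1))) (n : ℕ) (k : Fin d) :
    ∑ l, ((A.submatrix Fin.succ Fin.succ) ^ n) k l ≤ 1 - (A ^ n) k.succ 0 := by
  have hrow := sum_row_of_mem_rowStochastic (pow_mem hA n) k.succ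
  rw [Fin.sum_univ_succ] at hrow
  rw [← hrow, add_sub_cancel_left]
  have hA0 : ∀ i j, 0 ≤ A i j := fun _ _ ↦ nonneg_of_mem_rowStochastic hA
  exact Finset.sum_le_sum fun l _ ↦ pow_submatrix_apply_le_s16 hA0 (Fin.succ_injective d) n k l

end OrderedRing

section Real

open scoped Norms.Operator

theorem linfty_opNorm_le_one_of_nonneg {B : Matrix ι κ ℝ} (hB : ∀ i j, 0 ≤ B i j)
    (h : ∀ i, ∑ j, B i j ≤ 1) : ‖B‖ ≤ 1 := by
  rw [linfty_opNorm_def, NNReal.coe_le_one, Finset.sup_le_iff]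
  intro i _
  rw [← NNReal.coe_le_one, NNReal.coe_sum]
  simpa [Real.norm_of_nonneg (hB i _)] using h i

theorem linfty_opNorm_lt_one_of_nonneg {B : Matrix ι κ ℝ} (hB : ∀ i j, 0 ≤ B i j)
    (h : ∀ i, ∑ j, B i j < 1) : ‖B‖ < 1 := by
  rw [linfty_opNorm_def, NNReal.coe_lt_one, Finset.sup_lt_iff zero_lt_one]
  intro i _
  rw [← NNReal.coe_lt_one, NNReal.coe_sum]
  simpa [Real.norm_of_nonneg (hB i _)] using h i

variable [DecidableEq ι] {A : Matrix ι ι ℝ}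

theorem exists_pos_forall_sum_pow_apply_lt_one (hA : ∀ i j, 0 ≤ A i j)
    (hA1 : ∀ i, ∑ j, A i j ≤ 1) (h : ∀ i, ∃ n, ∑ j, (A ^ n) i j < 1) :
    ∃ N, 0 < N ∧ ∀ i, ∑ j, (A ^ N) i j < 1 := by
  choose n hn using h
  refine ⟨Finset.univ.sup n + 1, Nat.succ_pos _, fun i ↦ ?_⟩
  refine (antitone_sum_pow_apply hA hA1 i ?_).trans_lt (hn i)
  exact (Finset.le_sup (Finset.mem_univ i)).trans (Nat.le_succ _)

theorem tendsto_pow_atTop_nhds_zero_of_forall_exists_sum_pow_apply_lt_one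
    (hA : ∀ i j, 0 ≤ A i j) (hA1 : ∀ i, ∑ j, A i j ≤ 1) (h : ∀ i, ∃ n, ∑ j, (A ^ n) i j < 1) :
    Tendsto (A ^ ·) atTop (nhds 0) := by
  obtain ⟨N, hN, hAN⟩ := exists_pos_forall_sum_pow_apply_lt_one hA hA1 h
  exact tendsto_pow_atTop_nhds_zero_of_norm_le_one_of_norm_pow_lt_one
    (linfty_opNorm_le_one_of_nonneg hA hA1) hN
    (linfty_opNorm_lt_one_of_nonneg (pow_apply_nonneg hA N) hAN)

end Real

end Matrix

theorem substochastic_powers_tendsto_zero_of_irreducible_general (d : ℕ)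
    (P : Matrix (Fin d) (Fin d) ℝ) (hP : ∀ k l, 0 ≤ P k l)
    (hProw : ∀ k, ∑ l, P k l ≤ 1)
    (w : Fin d → ℝ) (hw0 : ∀ l, 0 ≤ w l) (hw1 : ∑ l, w l = 1)
    (Pbar : Matrix (Fin (d + 1)) (Fin (d + 1)) ℝ)
    (hPbar00 : Pbar 0 0 = 0)
    (hPbar0succ : ∀ l : Fin d, Pbar 0 l.succ = w l)
    (hPbarsucc0 : ∀ k : Fin d, Pbar k.succ 0 = 1 - ∑ l, P k l)
    (hPbarsucc : ∀ k l : Fin d, Pbar k.succ l.succ = P k l)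
    (hirr : ∀ i j : Fin (d + 1), ∃ n : ℕ, 1 ≤ n ∧ 0 < (Pbar ^ n) i j) :
    Tendsto (fun n => P ^ n) atTop (nhds 0) := by
  have hPbar : Pbar ∈ rowStochastic ℝ (Fin (d + 1)) :=
    mem_rowStochastic_of_succ_succ hP hProw hw0 hw1 hPbar00 hPbar0succ hPbarsucc0 hPbarsucc
  have hsub : Pbar.submatrix Fin.succ Fin.succ = P := by
    ext k l
    exact hPbarsucc k l
  refine tendsto_pow_atTop_nhds_zero_of_forall_exists_sum_pow_apply_lt_one hP hProw fun k ↦ ?_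
  obtain ⟨n, -, hn⟩ := hirr k.succ 0
  refine ⟨n, ?_⟩
  calc ∑ l, (P ^ n) k l ≤ 1 - (Pbar ^ n) k.succ 0 :=
        hsub ▸ sum_pow_submatrix_succ_apply_le hPbar n k
    _ < 1 := sub_lt_self 1 hn

/-- if the stochastic matrix `P̄` obtained from the substochastic routing
matrix `P` by adjoining the outside node `0` (which redistributes input according to `w`)
is irreducible, then the powers `P^n` converge entrywise to the zero matrix. -/
theorem substochastic_powers_tendsto_zero_of_irreducible (d : ℕ) (hd : 2 ≤ d)
    (P : Matrix (Fin d) (Fin d) ℝ) (hP : ∀ k l, 0 ≤ P k l)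
    (hProw : ∀ k, ∑ l, P k l ≤ 1)
    (w : Fin d → ℝ) (hw0 : ∀ l, 0 ≤ w l) (hw1 : ∑ l, w l = 1)
    (Pbar : Matrix (Fin (d + 1)) (Fin (d + 1)) ℝ)
    (hPbar00 : Pbar 0 0 = 0)
    (hPbar0succ : ∀ l : Fin d, Pbar 0 l.succ = w l)
    (hPbarsucc0 : ∀ k : Fin d, Pbar k.succ 0 = 1 - ∑ l, P k l)
    (hPbarsucc : ∀ k l : Fin d, Pbar k.succ l.succ = P k l)
    (hirr : ∀ i j : Fin (d + 1), ∃ n : ℕ, 1 ≤ n ∧ 0 < (Pbar ^ n) i j) :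
    Tendsto (fun n => P ^ n) atTop (nhds 0) :=
  substochastic_powers_tendsto_zero_of_irreducible_general d P hP hProw w hw0 hw1 Pbar hPbar00
    hPbar0succ hPbarsucc0 hPbarsucc hirr
end
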